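/- (Fidelity perturbation bound) For any density operators τ₁, τ₂ and any unitary U on a finite-dimensional Hilbert space, |Fid(Uτ₁U†, τ₁) − Fid(Uτ₂U†, τ₂)| ≤ 4 √(1 − Fid(τ₁, τ₂)). -/

import Mathlib

open Matrix Kronecker
open scoped ComplexOrder

/-- Time evolution unitary `e^{-iHt}`. -/
noncomputable def timeEvo {ι : Type} [Fintype ι] [DecidableEq ι]
    (H : Matrix ι ι ℂ) (t : ℝ) : Matrix ι ι ℂ :=
  NormedSpace.exp ((-(Complex.I * (t : ℂ))) • H)

/-- Conjugation `U M U†`. -/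
noncomputable def uconj {ι : Type} [Fintype ι] (U M : Matrix ι ι ℂ) : Matrix ι ι ℂ :=
  U * M * Uᴴ

/-- A density operator: positive semidefinite with unit trace. -/
noncomputable def IsState {ι : Type} [Fintype ι] (ρ : Matrix ι ι ℂ) : Prop :=
  ρ.PosSemidef ∧ ρ.trace = 1

/-- Choi matrix of a linear map. -/
noncomputable def choi {ι κ : Type} [Fintype ι] [DecidableEq ι] [Fintype κ]
    (E : Matrix ι ι ℂ →ₗ[ℂ] Matrix κ κ ℂ) : Matrix (ι × κ) (ι × κ) ℂ :=
  fun p q => E (Matrix.single p.1 q.1 1) p.2 q.2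

/-- A quantum channel: completely positive (positive semidefinite Choi matrix)
and trace preserving. -/
noncomputable def IsCPTP {ι κ : Type} [Fintype ι] [DecidableEq ι] [Fintype κ]
    (E : Matrix ι ι ℂ →ₗ[ℂ] Matrix κ κ ℂ) : Prop :=
  (choi E).PosSemidef ∧ ∀ M : Matrix ι ι ℂ, (E M).trace = M.trace

/-- Partial trace over the second (right) tensor factor. -/
noncomputable def ptraceRight {ι κ : Type} [Fintype ι] [Fintype κ]
    (M : Matrix (ι × κ) (ι × κ) ℂ) : Matrix ι ι ℂ :=
  fun i j => ∑ k, M (i, k) (j, k)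

/-- Partial trace over the first (left) tensor factor. -/
noncomputable def ptraceLeft {ι κ : Type} [Fintype ι] [Fintype κ]
    (M : Matrix (ι × κ) (ι × κ) ℂ) : Matrix κ κ ℂ :=
  fun i j => ∑ k, M (k, i) (k, j)

/-- Positive semidefinite square root, extended by `0` to non-PSD matrices. -/
noncomputable def msqrt {ι : Type} [Fintype ι] [DecidableEq ι]
    (M : Matrix ι ι ℂ) : Matrix ι ι ℂ :=
  @dite _ M.PosSemidef (Classical.propDecidable _) (fun h => h.1.eigenvectorUnitary.1 * diagonal ((↑) ∘ Real.sqrt ∘ h.1.eigenvalues) *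
    (star h.1.eigenvectorUnitary : Matrix ι ι ℂ)) (fun _ => 0)

/-- Trace norm `‖M‖₁ = Tr √(M†M)`. -/
noncomputable def traceNorm {ι : Type} [Fintype ι] [DecidableEq ι]
    (M : Matrix ι ι ℂ) : ℝ :=
  (msqrt (Mᴴ * M)).trace.re

/-- Uhlmann fidelity `Fid(σ,τ) = ‖√σ√τ‖₁`. -/
noncomputable def Fid {ι : Type} [Fintype ι] [DecidableEq ι]
    (σ τ : Matrix ι ι ℂ) : ℝ :=
  traceNorm (msqrt σ * msqrt τ)

/-- Rank-one projector `|v⟩⟨v|` of a vector. -/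
noncomputable def proj {ι : Type} (v : ι → ℂ) : Matrix ι ι ℂ :=
  Matrix.vecMulVec v (star v)

/-- The asymmetry monotone `f_t(ρ) = 1 - Fid(ρ, e^{-iHt} ρ e^{iHt})`. -/
noncomputable def ft {ι : Type} [Fintype ι] [DecidableEq ι]
    (H : Matrix ι ι ℂ) (t : ℝ) (ρ : Matrix ι ι ℂ) : ℝ :=
  1 - Fid ρ (uconj (timeEvo H t) ρ)

/-!
Every `√ρ W` with `W` unitary is a unit vector of the Hilbert–Schmidt space (a purification
of the state `ρ`), and by polar decomposition `Fid ρ σ` is the largest value of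
`Re ⟪√ρ V, √σ W⟫` over unitaries `V, W`. Hence `√(2 - 2 Fid)` is the distance between
suitably aligned purifications and obeys the triangle inequality. Going around
`Uτ₁U† → Uτ₂U† → τ₂ → τ₁` and using unitary invariance of `Fid`, the numbers
`bᵢ = √(1 - Fid (UτᵢU†) τᵢ) ∈ [0, 1]` satisfy `|b₁ - b₂| ≤ 2 √(1 - Fid τ₁ τ₂)`, and
`|Fid (Uτ₁U†) τ₁ - Fid (Uτ₂U†) τ₂| = |b₂² - b₁²| ≤ 2 |b₁ - b₂|`.
-/

open scoped InnerProductSpace MatrixOrder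

lemma norm_sub_eq_sqrt_two_mul_sqrt_of_norm_eq_one {𝕜 E : Type*} [RCLike 𝕜]
    [NormedAddCommGroup E] [InnerProductSpace 𝕜 E] {x y : E} (hx : ‖x‖ = 1) (hy : ‖y‖ = 1) :
    ‖x - y‖ = √2 * √(1 - RCLike.re ⟪x, y⟫_𝕜) := by
  rw [← Real.sqrt_mul zero_le_two, ← Real.sqrt_sq (norm_nonneg (x - y)), norm_sub_sq (𝕜 := 𝕜),
    hx, hy]
  ring_nf

lemma abs_sq_sub_sq_le_two_mul_abs_sub {a b : ℝ} (ha : a ∈ Set.Icc (0 : ℝ) 1)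
    (hb : b ∈ Set.Icc (0 : ℝ) 1) : |a ^ 2 - b ^ 2| ≤ 2 * |a - b| := by
  rw [sq_sub_sq, abs_mul, abs_of_nonneg (add_nonneg ha.1 hb.1)]
  exact mul_le_mul_of_nonneg_right (by linarith [ha.2, hb.2]) (abs_nonneg _)

lemma sqrt_one_sub_mem_Icc {F : ℝ} (h₀ : 0 ≤ F) (h₁ : F ≤ 1) :
    √(1 - F) ∈ Set.Icc (0 : ℝ) 1 ∧ √(1 - F) ^ 2 = 1 - F :=
  ⟨⟨Real.sqrt_nonneg _, Real.sqrt_le_one.mpr (by linarith)⟩, Real.sq_sqrt (by linarith)⟩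

section HilbertSchmidt

variable {ι : Type} [Fintype ι]

/-- A matrix as a vector of the Hilbert–Schmidt space `ℂ^(ι × ι)`. -/
def hsVec (M : Matrix ι ι ℂ) : EuclideanSpace ℂ (ι × ι) :=
  WithLp.toLp 2 fun p => M p.1 p.2

lemma inner_hsVec (X Y : Matrix ι ι ℂ) : ⟪hsVec X, hsVec Y⟫_ℂ = (Xᴴ * Y).trace := by
  simp only [hsVec, PiLp.inner_apply, RCLike.inner_apply, Matrix.trace, Matrix.diag,
    Matrix.mul_apply, Matrix.conjTranspose_apply, Fintype.sum_prod_type]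
  rw [Finset.sum_comm]
  simp only [mul_comm, Complex.star_def]

lemma norm_hsVec_sq (X : Matrix ι ι ℂ) : ‖hsVec X‖ ^ 2 = (Xᴴ * X).trace.re := by
  rw [← inner_self_eq_norm_sq (𝕜 := ℂ), inner_hsVec]
  rfl

end HilbertSchmidt

section

variable {ι : Type} [Fintype ι] [DecidableEq ι]

lemma trace_uconj {U : Matrix ι ι ℂ} (hU : Uᴴ * U = 1) (M : Matrix ι ι ℂ) :
    (uconj U M).trace = M.trace := by
  rw [uconj, mul_assoc, trace_mul_comm, mul_assoc, hU, mul_one]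

section MatrixSqrt

variable {M : Matrix ι ι ℂ}

lemma msqrt_eq_cfcSqrt (hM : M.PosSemidef) : msqrt M = CFC.sqrt M := by
  rw [CFC.sqrt_eq_real_sqrt M hM.nonneg, cfcₙ_eq_cfc, hM.1.cfc_eq]
  simp only [msqrt, dif_pos hM, IsHermitian.cfc, Unitary.conjStarAlgAut_apply]
  rfl

lemma posSemidef_msqrt (hM : M.PosSemidef) : (msqrt M).PosSemidef := by
  rw [msqrt_eq_cfcSqrt hM]
  exact (CFC.sqrt_nonneg M).posSemidef

lemma conjTranspose_msqrt (hM : M.PosSemidef) : (msqrt M)ᴴ = msqrt M :=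
  (posSemidef_msqrt hM).1

lemma msqrt_mul_self (hM : M.PosSemidef) : msqrt M * msqrt M = M := by
  rw [msqrt_eq_cfcSqrt hM]
  exact CFC.sqrt_mul_sqrt_self M hM.nonneg

lemma msqrt_uconj {U : Matrix ι ι ℂ} (hU : Uᴴ * U = 1) (hM : M.PosSemidef) :
    msqrt (uconj U M) = uconj U (msqrt M) := by
  rw [uconj, uconj, msqrt_eq_cfcSqrt (hM.mul_mul_conjTranspose_same U)]
  refine CFC.sqrt_unique ?_ ((posSemidef_msqrt hM).mul_mul_conjTranspose_same U).nonneg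
  simp only [mul_assoc]
  rw [← mul_assoc Uᴴ U, hU, one_mul, ← mul_assoc (msqrt M), msqrt_mul_self hM]

lemma isState_uconj {U ρ : Matrix ι ι ℂ} (hU : Uᴴ * U = 1) (hρ : IsState ρ) :
    IsState (uconj U ρ) :=
  ⟨hρ.1.mul_mul_conjTranspose_same U, (trace_uconj hU ρ).trans hρ.2⟩

end MatrixSqrt

lemma norm_hsVec_mul_unitary (X : Matrix ι ι ℂ) {W : Matrix ι ι ℂ} (hW : Wᴴ * W = 1) :
    ‖hsVec (X * W)‖ = ‖hsVec X‖ := by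
  refine (sq_eq_sq₀ (norm_nonneg _) (norm_nonneg _)).mp ?_
  rw [norm_hsVec_sq, norm_hsVec_sq, conjTranspose_mul, mul_assoc, trace_mul_comm, mul_assoc,
    mul_assoc, mul_eq_one_comm.mp hW, mul_one]

lemma norm_hsVec_msqrt_sq {ρ : Matrix ι ι ℂ} (hρ : ρ.PosSemidef) :
    ‖hsVec (msqrt ρ)‖ ^ 2 = ρ.trace.re := by
  rw [norm_hsVec_sq, conjTranspose_msqrt hρ, msqrt_mul_self hρ]

lemma norm_hsVec_msqrt_mul_unitary {ρ W : Matrix ι ι ℂ} (hρ : IsState ρ) (hW : Wᴴ * W = 1) :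
    ‖hsVec (msqrt ρ * W)‖ = 1 := by
  rw [norm_hsVec_mul_unitary _ hW, ← Real.sqrt_sq (norm_nonneg _), norm_hsVec_msqrt_sq hρ.1,
    hρ.2, Complex.one_re, Real.sqrt_one]

lemma re_trace_mul_unitary_le_trace {P W : Matrix ι ι ℂ} (hP : P.PosSemidef)
    (hW : Wᴴ * W = 1) : (P * W).trace.re ≤ P.trace.re := by
  calc (P * W).trace.re = RCLike.re ⟪hsVec (msqrt P), hsVec (msqrt P * W)⟫_ℂ := by
        rw [inner_hsVec, conjTranspose_msqrt hP, ← mul_assoc, msqrt_mul_self hP]; rfl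
    _ ≤ ‖hsVec (msqrt P)‖ * ‖hsVec (msqrt P * W)‖ := re_inner_le_norm _ _
    _ = P.trace.re := by rw [norm_hsVec_mul_unitary _ hW, ← sq, norm_hsVec_msqrt_sq hP]

lemma exists_unitary_mul_diagonal_sqrt (B : Matrix ι ι ℂ) (d : ι → ℝ)
    (hB : Bᴴ * B = diagonal fun j => (d j : ℂ)) :
    ∃ U : Matrix ι ι ℂ, Uᴴ * U = 1 ∧ B = U * diagonal fun j => (√(d j) : ℂ) := by
  set col : ι → EuclideanSpace ℂ ι := fun j => WithLp.toLp 2 fun i => B i j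
  have inner_col (j k : ι) : ⟪col j, col k⟫_ℂ = (Bᴴ * B) j k := by
    simp [col, PiLp.inner_apply, mul_apply, mul_comm]
  have norm_col (j : ι) : ‖col j‖ ^ 2 = d j := by
    rw [← inner_self_eq_norm_sq (𝕜 := ℂ), inner_col, hB, diagonal_apply_eq]
    rfl
  -- The nonzero columns, normalized, are orthonormal; `U` is their extension to a basis.
  set v : ι → EuclideanSpace ℂ ι := fun j => (√(d j) : ℂ)⁻¹ • col j
  have hv : Orthonormal ℂ ({j | √(d j) ≠ 0}.domRestrict v) := by
    rw [orthonormal_iff_ite]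
    rintro ⟨j, hj⟩ ⟨k, hk⟩
    simp only [Set.domRestrict_apply, v, inner_smul_left, inner_smul_right, inner_col, hB,
      diagonal_apply, Subtype.mk.injEq]
    split_ifs with hjk
    · subst hjk
      have hd : (d j : ℂ) = (√(d j) : ℂ) * (√(d j) : ℂ) := by
        rw [← Complex.ofReal_mul, Real.mul_self_sqrt (Real.sqrt_ne_zero'.mp hj).le]
      have : (√(d j) : ℂ) ≠ 0 := Complex.ofReal_ne_zero.mpr hj
      rw [hd, map_inv₀, Complex.conj_ofReal]
      field_simp
    · simp
  obtain ⟨b, hb⟩ := hv.exists_orthonormalBasis_extension_of_card_eq finrank_euclideanSpace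
  refine ⟨(EuclideanSpace.basisFun ι ℂ).toBasis.toMatrix b, ?_, ?_⟩
  · have := (EuclideanSpace.basisFun ι ℂ).toMatrix_orthonormalBasis_mem_unitary b
    rwa [Matrix.mem_unitaryGroup_iff'] at this
  · ext i j
    rw [mul_diagonal, Module.Basis.toMatrix_apply, OrthonormalBasis.coe_toBasis_repr_apply,
      EuclideanSpace.basisFun_repr]
    by_cases hj : √(d j) = 0
    · have : col j = 0 := by
        refine norm_eq_zero.mp (pow_eq_zero_iff two_ne_zero |>.mp (le_antisymm ?_ (sq_nonneg _)))
        exact norm_col j ▸ Real.sqrt_eq_zero'.mp hj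
      rw [hj, Complex.ofReal_zero, mul_zero]
      exact congr($this i)
    · rw [hb j hj]
      have : (√(d j) : ℂ) ≠ 0 := Complex.ofReal_ne_zero.mpr hj
      simp only [v, col, PiLp.smul_apply, smul_eq_mul]
      field_simp

lemma exists_unitary_eq_mul_msqrt (A : Matrix ι ι ℂ) :
    ∃ W : Matrix ι ι ℂ, Wᴴ * W = 1 ∧ A = W * msqrt (Aᴴ * A) := by
  have hAA : (Aᴴ * A).PosSemidef := posSemidef_conjTranspose_mul_self A
  set V : Matrix ι ι ℂ := hAA.1.eigenvectorUnitary.1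
  set d := hAA.1.eigenvalues
  have hV : Vᴴ * V = 1 := Unitary.coe_star_mul_self hAA.1.eigenvectorUnitary
  have hV' : V * Vᴴ = 1 := Unitary.coe_mul_star_self hAA.1.eigenvectorUnitary
  have hspec : Aᴴ * A = V * diagonal (fun j => (d j : ℂ)) * Vᴴ := hAA.1.spectral_theorem
  have hsqrt : msqrt (Aᴴ * A) = V * diagonal (fun j => (√(d j) : ℂ)) * Vᴴ := by
    rw [msqrt, dif_pos hAA]; rfl
  obtain ⟨U, hU, hAV⟩ := exists_unitary_mul_diagonal_sqrt (A * V) d (by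
    rw [conjTranspose_mul, mul_assoc, ← mul_assoc Aᴴ, hspec]
    simp only [← mul_assoc, hV, one_mul]
    rw [mul_assoc, hV, mul_one])
  refine ⟨U * Vᴴ, ?_, ?_⟩
  · rw [conjTranspose_mul, conjTranspose_conjTranspose, mul_assoc, ← mul_assoc Uᴴ, hU, one_mul,
      hV']
  · rw [hsqrt]
    calc A = A * V * Vᴴ := by rw [mul_assoc, hV', mul_one]
      _ = U * Vᴴ * (V * diagonal (fun j => (√(d j) : ℂ)) * Vᴴ) := by
        rw [hAV]; simp only [mul_assoc]; rw [← mul_assoc Vᴴ V, hV, one_mul]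

lemma traceNorm_nonneg (A : Matrix ι ι ℂ) : 0 ≤ traceNorm A :=
  Complex.nonneg_iff.mp (posSemidef_msqrt (posSemidef_conjTranspose_mul_self A)).trace_nonneg |>.1

lemma re_trace_mul_unitary_le_traceNorm (A : Matrix ι ι ℂ) {W : Matrix ι ι ℂ}
    (hW : Wᴴ * W = 1) : (A * W).trace.re ≤ traceNorm A := by
  obtain ⟨Q, hQ, hAQ⟩ := exists_unitary_eq_mul_msqrt A
  have hWQ : (W * Q)ᴴ * (W * Q) = 1 := by
    rw [conjTranspose_mul, mul_assoc, ← mul_assoc Wᴴ, hW, one_mul, hQ]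
  calc (A * W).trace.re = (msqrt (Aᴴ * A) * (W * Q)).trace.re := by
        conv_lhs => rw [hAQ, mul_assoc, trace_mul_comm, mul_assoc]
    _ ≤ traceNorm A :=
        re_trace_mul_unitary_le_trace (posSemidef_msqrt (posSemidef_conjTranspose_mul_self A)) hWQ

lemma exists_unitary_re_trace_mul_eq_traceNorm (A : Matrix ι ι ℂ) :
    ∃ W : Matrix ι ι ℂ, Wᴴ * W = 1 ∧ (A * W).trace.re = traceNorm A := by
  obtain ⟨Q, hQ, hAQ⟩ := exists_unitary_eq_mul_msqrt A
  refine ⟨Qᴴ, by rw [conjTranspose_conjTranspose, ← mul_eq_one_comm, hQ], ?_⟩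
  conv_lhs => rw [hAQ, mul_assoc, trace_mul_comm, mul_assoc, hQ, mul_one]
  rfl

lemma traceNorm_uconj {U : Matrix ι ι ℂ} (hU : Uᴴ * U = 1) (A : Matrix ι ι ℂ) :
    traceNorm (uconj U A) = traceNorm A := by
  have h : (uconj U A)ᴴ * uconj U A = uconj U (Aᴴ * A) := by
    simp only [uconj, conjTranspose_mul, conjTranspose_conjTranspose, mul_assoc]
    rw [← mul_assoc Uᴴ U, hU, one_mul]
  rw [traceNorm, h, msqrt_uconj hU (posSemidef_conjTranspose_mul_self A), trace_uconj hU, traceNorm]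

lemma traceNorm_conjTranspose (A : Matrix ι ι ℂ) : traceNorm Aᴴ = traceNorm A := by
  obtain ⟨Q, hQ, hAQ⟩ := exists_unitary_eq_mul_msqrt A
  have h : Aᴴᴴ * Aᴴ = uconj Q (Aᴴ * A) := by
    conv_lhs => rw [conjTranspose_conjTranspose, hAQ, conjTranspose_mul,
      conjTranspose_msqrt (posSemidef_conjTranspose_mul_self A)]
    rw [uconj, mul_assoc, mul_assoc, ← mul_assoc (msqrt _), msqrt_mul_self
      (posSemidef_conjTranspose_mul_self A), ← mul_assoc]
  rw [traceNorm, h, msqrt_uconj hQ (posSemidef_conjTranspose_mul_self A), trace_uconj hQ, traceNorm]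

lemma fid_nonneg (σ τ : Matrix ι ι ℂ) : 0 ≤ Fid σ τ :=
  traceNorm_nonneg _

section Fidelity

variable {ρ σ τ : Matrix ι ι ℂ}

lemma fid_comm (hσ : σ.PosSemidef) (hτ : τ.PosSemidef) : Fid σ τ = Fid τ σ := by
  rw [Fid, Fid, ← traceNorm_conjTranspose, conjTranspose_mul, conjTranspose_msqrt hσ,
    conjTranspose_msqrt hτ]

lemma fid_uconj {U : Matrix ι ι ℂ} (hU : Uᴴ * U = 1) (hσ : σ.PosSemidef) (hτ : τ.PosSemidef) :
    Fid (uconj U σ) (uconj U τ) = Fid σ τ := by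
  have h : uconj U (msqrt σ) * uconj U (msqrt τ) = uconj U (msqrt σ * msqrt τ) := by
    simp only [uconj, mul_assoc]
    rw [← mul_assoc Uᴴ U, hU, one_mul]
  rw [Fid, msqrt_uconj hU hσ, msqrt_uconj hU hτ, h, traceNorm_uconj hU, Fid]

lemma inner_hsVec_msqrt_mul (hσ : σ.PosSemidef) (V W : Matrix ι ι ℂ) :
    ⟪hsVec (msqrt σ * V), hsVec (msqrt τ * W)⟫_ℂ = (msqrt σ * msqrt τ * (W * Vᴴ)).trace := by
  rw [inner_hsVec, conjTranspose_mul, conjTranspose_msqrt hσ, mul_assoc, trace_mul_comm]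
  simp only [mul_assoc]

lemma fid_le_one (hσ : IsState σ) (hτ : IsState τ) : Fid σ τ ≤ 1 := by
  obtain ⟨W, hW, hFW⟩ := exists_unitary_re_trace_mul_eq_traceNorm (msqrt σ * msqrt τ)
  calc Fid σ τ = RCLike.re ⟪hsVec (msqrt σ * 1), hsVec (msqrt τ * W)⟫_ℂ := by
        rw [inner_hsVec_msqrt_mul hσ.1, conjTranspose_one, mul_one, Fid]; exact hFW.symm
    _ ≤ ‖hsVec (msqrt σ * 1)‖ * ‖hsVec (msqrt τ * W)‖ := re_inner_le_norm _ _
    _ = 1 := by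
      rw [norm_hsVec_msqrt_mul_unitary hσ (by simp), norm_hsVec_msqrt_mul_unitary hτ hW, one_mul]

/-- Triangle inequality for the Bures distance `√(2 - 2 Fid)`, divided by `√2`. -/
lemma sqrt_one_sub_fid_le_add (hρ : IsState ρ) (hσ : IsState σ) (hτ : IsState τ) :
    √(1 - Fid ρ τ) ≤ √(1 - Fid ρ σ) + √(1 - Fid σ τ) := by
  obtain ⟨V, hV, hFV⟩ := exists_unitary_re_trace_mul_eq_traceNorm (msqrt ρ * msqrt σ)
  obtain ⟨W, hW, hFW⟩ := exists_unitary_re_trace_mul_eq_traceNorm (msqrt σ * msqrt τ)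
  -- Purifications of `ρ, σ, τ`, aligned so that `⟪X, Y⟫` and `⟪Y, Z⟫` attain the fidelities.
  set X := hsVec (msqrt ρ * Vᴴ)
  set Y := hsVec (msqrt σ * 1)
  set Z := hsVec (msqrt τ * W)
  have hX : ‖X‖ = 1 :=
    norm_hsVec_msqrt_mul_unitary hρ (by rw [conjTranspose_conjTranspose, ← mul_eq_one_comm, hV])
  have hY : ‖Y‖ = 1 := norm_hsVec_msqrt_mul_unitary hσ (by simp)
  have hZ : ‖Z‖ = 1 := norm_hsVec_msqrt_mul_unitary hτ hW
  have hXY : RCLike.re ⟪X, Y⟫_ℂ = Fid ρ σ := by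
    rw [inner_hsVec_msqrt_mul hρ.1, one_mul, conjTranspose_conjTranspose, Fid]
    exact hFV
  have hYZ : RCLike.re ⟪Y, Z⟫_ℂ = Fid σ τ := by
    rw [inner_hsVec_msqrt_mul hσ.1, conjTranspose_one, mul_one, Fid]
    exact hFW
  have hXZ : RCLike.re ⟪X, Z⟫_ℂ ≤ Fid ρ τ := by
    rw [inner_hsVec_msqrt_mul hρ.1, conjTranspose_conjTranspose]
    refine re_trace_mul_unitary_le_traceNorm _ ?_
    rw [conjTranspose_mul, mul_assoc, ← mul_assoc Wᴴ, hW, one_mul, hV]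
  refine le_of_mul_le_mul_left ?_ (Real.sqrt_pos.mpr two_pos)
  calc √2 * √(1 - Fid ρ τ) ≤ √2 * √(1 - RCLike.re ⟪X, Z⟫_ℂ) := by gcongr
    _ = ‖X - Z‖ := (norm_sub_eq_sqrt_two_mul_sqrt_of_norm_eq_one (𝕜 := ℂ) hX hZ).symm
    _ ≤ ‖X - Y‖ + ‖Y - Z‖ := norm_sub_le_norm_sub_add_norm_sub X Y Z
    _ = √2 * (√(1 - Fid ρ σ) + √(1 - Fid σ τ)) := by
      rw [norm_sub_eq_sqrt_two_mul_sqrt_of_norm_eq_one (𝕜 := ℂ) hX hY,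
        norm_sub_eq_sqrt_two_mul_sqrt_of_norm_eq_one (𝕜 := ℂ) hY hZ, hXY, hYZ, mul_add]

lemma sqrt_one_sub_fid_uconj_le {U : Matrix ι ι ℂ} (hU : Uᴴ * U = 1) (hσ : IsState σ)
    (hτ : IsState τ) :
    √(1 - Fid (uconj U σ) σ) ≤ √(1 - Fid (uconj U τ) τ) + 2 * √(1 - Fid σ τ) :=
  calc √(1 - Fid (uconj U σ) σ)
      ≤ √(1 - Fid (uconj U σ) (uconj U τ)) + √(1 - Fid (uconj U τ) σ) :=
        sqrt_one_sub_fid_le_add (isState_uconj hU hσ) (isState_uconj hU hτ) hσ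
    _ ≤ √(1 - Fid σ τ) + (√(1 - Fid (uconj U τ) τ) + √(1 - Fid τ σ)) := by
        rw [fid_uconj hU hσ.1 hτ.1]
        gcongr
        exact sqrt_one_sub_fid_le_add (isState_uconj hU hτ) hτ hσ
    _ = √(1 - Fid (uconj U τ) τ) + 2 * √(1 - Fid σ τ) := by
        rw [fid_comm hτ.1 hσ.1]; ring

end Fidelity

end

/-- Fidelity perturbation bound:
`|Fid(Uτ₁U†, τ₁) − Fid(Uτ₂U†, τ₂)| ≤ 4 √(1 − Fid(τ₁, τ₂))`. -/
theorem fid_perturbation_bound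
    {ι : Type} [Fintype ι] [DecidableEq ι]
    (U τ₁ τ₂ : Matrix ι ι ℂ)
    (hU : Uᴴ * U = 1)
    (hτ₁ : IsState τ₁) (hτ₂ : IsState τ₂) :
    |Fid (uconj U τ₁) τ₁ - Fid (uconj U τ₂) τ₂|
      ≤ 4 * Real.sqrt (1 - Fid τ₁ τ₂) := by
  obtain ⟨hb₁, hsq₁⟩ := sqrt_one_sub_mem_Icc (fid_nonneg (uconj U τ₁) τ₁)
    (fid_le_one (isState_uconj hU hτ₁) hτ₁)
  obtain ⟨hb₂, hsq₂⟩ := sqrt_one_sub_mem_Icc (fid_nonneg (uconj U τ₂) τ₂)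
    (fid_le_one (isState_uconj hU hτ₂) hτ₂)
  calc |Fid (uconj U τ₁) τ₁ - Fid (uconj U τ₂) τ₂|
      = |√(1 - Fid (uconj U τ₂) τ₂) ^ 2 - √(1 - Fid (uconj U τ₁) τ₁) ^ 2| := by
        rw [hsq₁, hsq₂]; ring_nf
    _ ≤ 2 * |√(1 - Fid (uconj U τ₂) τ₂) - √(1 - Fid (uconj U τ₁) τ₁)| :=
        abs_sq_sub_sq_le_two_mul_abs_sub hb₂ hb₁
    _ ≤ 2 * (2 * √(1 - Fid τ₁ τ₂)) := by
        have h₂₁ := sqrt_one_sub_fid_uconj_le hU hτ₂ hτ₁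
        rw [fid_comm hτ₂.1 hτ₁.1] at h₂₁
        gcongr
        exact abs_sub_le_iff.mpr ⟨by linarith, by linarith [sqrt_one_sub_fid_uconj_le hU hτ₁ hτ₂]⟩
    _ = 4 * Real.sqrt (1 - Fid τ₁ τ₂) := by ring
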